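/- Let g : ℂ → ℝ be real-valued and suppose there exists a nonvanishing smooth h : ℂ → ℂ with ∂̄h(x) = (b/2) x h(x) (b > 0), such that H_g(x) := h(gx) e^{i χ_g(x)} h(x)^{-1} is holomorphic, where g ∈ ℂ with |g| = 1 acts by multiplication. Then ∂̄χ_g = 0, and hence (since χ_g is real-valued) χ_g is constant. -/

import Mathlib

open Complex Real

/-- Directional derivative of `f : ℂ → ℂ` (as real-differentiable map) in direction `v`. -/
noncomputable def pd (f : ℂ → ℂ) (v z : ℂ) : ℂ := fderiv ℝ f z v

/-- Wirtinger derivative ∂_{z̄} = ½(∂_{x₁} + i ∂_{x₂}). -/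
noncomputable def wdzbar (f : ℂ → ℂ) (z : ℂ) : ℂ :=
  (pd f 1 z + Complex.I * pd f Complex.I z) / 2

lemma pd_linear {f : ℂ → ℂ} {z : ℂ} (w : ℂ) :
    pd f w z = (w.re : ℂ) * pd f 1 z + (w.im : ℂ) * pd f Complex.I z := by
  have h1 : w = w.re • (1 : ℂ) + w.im • Complex.I := by
    simp [Complex.real_smul, Complex.re_add_im]
  unfold pd
  conv_lhs => rw [h1]
  rw [map_add, map_smul, map_smul]
  simp [Complex.real_smul]

lemma wdzbar_mul {f g : ℂ → ℂ} {z : ℂ} (hf : DifferentiableAt ℝ f z)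
    (hg : DifferentiableAt ℝ g z) :
    wdzbar (fun x => f x * g x) z = wdzbar f z * g z + f z * wdzbar g z := by
  have h1 : ∀ v, pd (fun x => f x * g x) v z = pd f v z * g z + f z * pd g v z := by
    intro v
    unfold pd
    rw [fderiv_fun_mul hf hg]
    simp only [ContinuousLinearMap.add_apply, ContinuousLinearMap.smul_apply, smul_eq_mul]
    ring
  unfold wdzbar
  rw [h1, h1]; ring

lemma wdzbar_comp_holo {φ Φ : ℂ → ℂ} {z d : ℂ}
    (hφ : DifferentiableAt ℝ φ z) (hΦ : HasDerivAt Φ d (φ z)) :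
    wdzbar (fun x => Φ (φ x)) z = d * wdzbar φ z := by
  have key : ∀ v, pd (fun x => Φ (φ x)) v z = d * pd φ v z := by
    intro v
    have h0 : HasFDerivAt Φ
        ((ContinuousLinearMap.smulRight (1 : ℂ →L[ℂ] ℂ) d).restrictScalars ℝ) (φ z) :=
      hΦ.hasFDerivAt.restrictScalars ℝ
    have h1 : HasFDerivAt (fun x => Φ (φ x))
        (((ContinuousLinearMap.smulRight (1 : ℂ →L[ℂ] ℂ) d).restrictScalars ℝ).comp
          (fderiv ℝ φ z)) z := by
      simpa [Function.comp_def] using HasFDerivAt.comp z h0 hφ.hasFDerivAt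
    rw [pd, h1.fderiv]
    simp [pd, smul_eq_mul]
    ring
  unfold wdzbar
  rw [key, key]; ring

lemma wdzbar_const_mul {f : ℂ → ℂ} {z : ℂ} (hf : DifferentiableAt ℝ f z) (c : ℂ) :
    wdzbar (fun x => c * f x) z = c * wdzbar f z := by
  have h1 : ∀ v, pd (fun x => c * f x) v z = c * pd f v z := by
    intro v
    unfold pd
    rw [fderiv_const_mul hf c]
    simp [smul_eq_mul]
  unfold wdzbar
  rw [h1, h1]; ring

lemma wdzbar_comp_mul {f : ℂ → ℂ} (hf : Differentiable ℝ f) (g z : ℂ) :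
    wdzbar (fun x => f (g * x)) z = (starRingEnd ℂ) g * wdzbar f (g * z) := by
  have hmul : HasFDerivAt (fun x : ℂ => g * x)
      (g • ContinuousLinearMap.id ℝ ℂ) z := by
    exact (hasFDerivAt_id z).const_smul g
  have hc : HasFDerivAt (fun x => f (g * x))
      ((fderiv ℝ f (g * z)).comp (g • ContinuousLinearMap.id ℝ ℂ)) z :=
    HasFDerivAt.comp z (hf (g * z)).hasFDerivAt hmul
  have key : ∀ v, pd (fun x => f (g * x)) v z = pd f (g * v) (g * z) := by
    intro v
    rw [pd, hc.fderiv]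
    simp [pd, smul_eq_mul]
  have e1 := pd_linear (f := f) (z := g * z) g
  have e2 := pd_linear (f := f) (z := g * z) (g * Complex.I)
  have hre : ((g * Complex.I).re : ℂ) = -(g.im : ℂ) := by
    simp [Complex.mul_re]
  have him : ((g * Complex.I).im : ℂ) = (g.re : ℂ) := by
    simp [Complex.mul_im]
  have hconj : (starRingEnd ℂ) g = (g.re : ℂ) - (g.im : ℂ) * Complex.I := by
    simp [Complex.ext_iff]
  unfold wdzbar
  rw [key, key, mul_one, e1, e2, hre, him, hconj]
  have hI : Complex.I ^ 2 = -1 := Complex.I_sq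
  set p1 := pd f 1 (g * z)
  set pI := pd f Complex.I (g * z)
  linear_combination ((g.im : ℂ) * pI / 2) * hI

theorem gauge_factor_is_constant (b : ℝ) (hb : 0 < b)
    (g : ℂ) (hg : ‖g‖ = 1)
    (h : ℂ → ℂ) (hh : ContDiff ℝ (⊤ : ℕ∞) h) (hne : ∀ z, h z ≠ 0)
    (hdbar : ∀ z, wdzbar h z = (b / 2 : ℂ) * z * h z)
    (χ : ℂ → ℝ) (hχ : ContDiff ℝ 1 fun w => ((χ w : ℝ) : ℂ))
    (hH : Differentiable ℂ fun x => h (g * x) * Complex.exp (Complex.I * χ x) * (h x)⁻¹) :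
    (∀ z, wdzbar (fun w => ((χ w : ℝ) : ℂ)) z = 0) ∧ ∃ c : ℝ, ∀ z, χ z = c := by
  have hhd : Differentiable ℝ h := hh.differentiable (by simp)
  have hχd : Differentiable ℝ (fun w => ((χ w : ℝ) : ℂ)) := hχ.differentiable one_ne_zero
  set χc : ℂ → ℂ := fun w => ((χ w : ℝ) : ℂ) with hχc
  set H : ℂ → ℂ := fun x => h (g * x) * Complex.exp (Complex.I * χ x) * (h x)⁻¹ with hHdef
  -- unit modulus
  have hgg : (starRingEnd ℂ) g * g = 1 := by
    rw [mul_comm, Complex.mul_conj, ← Complex.sq_norm, hg]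
    norm_num
  -- differentiability of pieces
  have hA : Differentiable ℝ (fun x => h (g * x)) :=
    hhd.comp ((differentiable_id).const_mul g)
  have hB : Differentiable ℝ (fun x => Complex.exp (Complex.I * χc x)) :=
    (Complex.differentiable_exp (𝕜 := ℝ)).comp (hχd.const_mul Complex.I)
  have hC : Differentiable ℝ (fun x => (h x)⁻¹) := by
    intro z
    have := (HasFDerivAt.comp z
      (((hasDerivAt_inv (hne z)).hasFDerivAt).restrictScalars ℝ) (hhd z).hasFDerivAt)
    exact this.differentiableAt
  -- key: wdzbar of χc vanishes
  have key : ∀ z, wdzbar χc z = 0 := by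
    intro z
    -- wdzbar of the three factors
    have wA : wdzbar (fun x => h (g * x)) z = (b / 2 : ℂ) * z * h (g * z) := by
      rw [wdzbar_comp_mul hhd g z, hdbar]
      calc (starRingEnd ℂ) g * ((b / 2 : ℂ) * (g * z) * h (g * z))
          = ((starRingEnd ℂ) g * g) * ((b / 2 : ℂ) * z * h (g * z)) := by ring
        _ = (b / 2 : ℂ) * z * h (g * z) := by rw [hgg, one_mul]
    have wB : wdzbar (fun x => Complex.exp (Complex.I * χc x)) z
        = Complex.exp (Complex.I * χc z) * (Complex.I * wdzbar χc z) := by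
      rw [wdzbar_comp_holo (hχd.const_mul Complex.I z)
        (Complex.hasDerivAt_exp (Complex.I * χc z)),
        wdzbar_const_mul (hχd z) Complex.I]
    have wC : wdzbar (fun x => (h x)⁻¹) z
        = -((h z) ^ 2)⁻¹ * ((b / 2 : ℂ) * z * h z) := by
      rw [wdzbar_comp_holo (hhd z) (hasDerivAt_inv (hne z)), hdbar]
    -- holomorphy of H gives wdzbar H = 0
    have hHz : wdzbar H z = 0 := by
      have hd := (hH z)
      have h1 : pd H Complex.I z = Complex.I * pd H 1 z := by
        have hres : fderiv ℝ H z = (fderiv ℂ H z).restrictScalars ℝ :=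
          (hd.hasFDerivAt.restrictScalars ℝ).fderiv
        unfold pd
        rw [hres]
        simp only [ContinuousLinearMap.coe_restrictScalars']
        have := map_smul (fderiv ℂ H z) Complex.I 1
        simpa [smul_eq_mul] using this
      unfold wdzbar
      rw [h1]
      have hI : Complex.I * Complex.I = -1 := Complex.I_mul_I
      rw [← mul_assoc, hI]
      ring
    -- expand wdzbar H by product rule
    have hAB : wdzbar (fun x => h (g * x) * Complex.exp (Complex.I * χc x)) z
        = wdzbar (fun x => h (g * x)) z * Complex.exp (Complex.I * χc z)
          + h (g * z) * wdzbar (fun x => Complex.exp (Complex.I * χc x)) z :=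
      wdzbar_mul (hA z) (hB z)
    have hexp : wdzbar H z
        = wdzbar (fun x => h (g * x) * Complex.exp (Complex.I * χc x)) z * (h z)⁻¹
          + (h (g * z) * Complex.exp (Complex.I * χc z)) * wdzbar (fun x => (h x)⁻¹) z := by
      have := wdzbar_mul (f := fun x => h (g * x) * Complex.exp (Complex.I * χc x))
        (g := fun x => (h x)⁻¹) ((hA z).mul (hB z)) (hC z)
      simpa [hHdef] using this
    rw [hAB, wA, wB, wC] at hexp
    rw [hHz] at hexp
    -- now solve for wdzbar χc z
    have hEne : Complex.exp (Complex.I * χc z) ≠ 0 := Complex.exp_ne_zero _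
    have hhz := hne z
    have hhgz := hne (g * z)
    have expand : ((b / 2 : ℂ) * z * h (g * z) * Complex.exp (Complex.I * χc z)
        + h (g * z) * (Complex.exp (Complex.I * χc z) * (Complex.I * wdzbar χc z))) * (h z)⁻¹
        + h (g * z) * Complex.exp (Complex.I * χc z)
          * (-((h z) ^ 2)⁻¹ * ((b / 2 : ℂ) * z * h z))
        = Complex.I * wdzbar χc z
          * (h (g * z) * Complex.exp (Complex.I * χc z) * (h z)⁻¹) := by
      field_simp
      ring
    have : Complex.I * wdzbar χc z
        * (h (g * z) * Complex.exp (Complex.I * χc z) * (h z)⁻¹) = 0 := by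
      rw [← expand]
      exact hexp.symm
    have hne3 : h (g * z) * Complex.exp (Complex.I * χc z) * (h z)⁻¹ ≠ 0 :=
      mul_ne_zero (mul_ne_zero hhgz hEne) (inv_ne_zero hhz)
    have := mul_eq_zero.mp this
    rcases this with h0 | h0
    · rcases mul_eq_zero.mp h0 with h0 | h0
      · exact absurd h0 Complex.I_ne_zero
      · exact h0
    · exact absurd h0 hne3
  refine ⟨key, ?_⟩
  -- χ is differentiable
  have hχdiff : Differentiable ℝ χ := by
    have h1 : Differentiable ℝ (fun z => (χc z).re) :=
      (Complex.reCLM.differentiable).comp hχd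
    simpa [hχc] using h1
  -- fderiv of χ vanishes
  have hfz : ∀ z, fderiv ℝ χ z = 0 := by
    intro z
    have hD : fderiv ℝ χc z = Complex.ofRealCLM.comp (fderiv ℝ χ z) := by
      have : HasFDerivAt χc (Complex.ofRealCLM.comp (fderiv ℝ χ z)) z :=
        HasFDerivAt.comp z Complex.ofRealCLM.hasFDerivAt (hχdiff z).hasFDerivAt
      exact this.fderiv
    have hk := key z
    unfold wdzbar pd at hk
    rw [hD] at hk
    simp only [ContinuousLinearMap.comp_apply, Complex.ofRealCLM_apply] at hk
    set a := fderiv ℝ χ z 1 with ha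
    set c := fderiv ℝ χ z Complex.I with hc2
    have hzero : ((a : ℂ) + Complex.I * (c : ℂ)) = 0 := by
      field_simp at hk
      simpa using hk
    have h1 : a = 0 := by
      have := congrArg Complex.re hzero
      simpa using this
    have h2 : c = 0 := by
      have := congrArg Complex.im hzero
      simpa using this
    ext v
    have hv : v = v.re • (1 : ℂ) + v.im • Complex.I := by
      simp [Complex.real_smul, Complex.re_add_im]
    rw [hv, map_add, map_smul, map_smul, ← ha, ← hc2, h1, h2]
    simp
  obtain ⟨c, hcon⟩ : ∃ c : ℝ, ∀ z, χ z = c :=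
    ⟨χ 0, fun z => is_const_of_fderiv_eq_zero hχdiff hfz z 0⟩
  exact ⟨c, hcon⟩
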